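/- Let θ̃ : [0,∞) → ℝ be defined by θ̃(x) = cos x for 0 ≤ x < π/4 and θ̃(x) = (e^{π/4}/√2)·e^{−x} for x ≥ π/4, and let f̃ : ℝ → ℝ be the even extension of θ̃ (i.e. f̃(x) = θ̃(|x|)). Then f̃ is continuously differentiable on ℝ, f̃ is square-integrable on ℝ, f̃ is not identically zero, and for every x ∈ ℝ with |x| ≠ π/4 the function f̃ is four times differentiable at x with f̃''''(x) = f̃(x). -/

import Mathlib

open Real MeasureTheory

/-- The function `θ̃` from Remark 1: `cos x` on `[0, π/4)` and
`(e^{π/4}/√2) e^{-x}` on `[π/4, ∞)`. -/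
noncomputable def thetaTilde (x : ℝ) : ℝ :=
  if x < π / 4 then Real.cos x
  else (Real.exp (π / 4) / Real.sqrt 2) * Real.exp (-x)

/-- The even extension `f̃(x) = θ̃(|x|)` of `θ̃` to all of `ℝ`. -/
noncomputable def fEven (x : ℝ) : ℝ := thetaTilde |x|

/-!
`θ̃` is `C¹` on all of `ℝ`: `cos` and `c e^{-x}` (with `c = e^{π/4}/√2`) meet at `π/4` with the
same value `√2/2` and the same slope `-√2/2`. Since moreover `θ̃'(0) = -sin 0 = 0`, the even
function `θ̃ ∘ |·|` is `C¹` as well. Away from `±π/4` the function `f̃` coincides near each point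
with `cos`, `c e^{-y}` or `c e^{y}`, each of which is its own fourth derivative. Finally
`|f̃ x| ≤ e^{π/4} e^{-|x|}`, which is square integrable.
-/

open Set Filter Topology
open scoped ContDiff

theorem contDiff_one_of_eqOn_Iic_of_eqOn_Ici {f g h : ℝ → ℝ} {a : ℝ}
    (hg : ContDiff ℝ 1 g) (hh : ContDiff ℝ 1 h) (hfg : EqOn f g (Iic a)) (hfh : EqOn f h (Ici a))
    (hderiv : deriv g a = deriv h a) : ContDiff ℝ 1 f := by
  have hasDerivAt : ∀ x, HasDerivAt f (if x ≤ a then deriv g x else deriv h x) x := by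
    intro x
    rcases lt_trichotomy x a with hx | rfl | hx
    · rw [if_pos hx.le]
      exact (hg.differentiable one_ne_zero x).hasDerivAt.congr_of_eventuallyEq <|
        eventually_of_mem (Iio_mem_nhds hx) fun _ hy => hfg (Iio_subset_Iic_self hy)
    · rw [if_pos le_rfl]
      have hleft : HasDerivWithinAt f (deriv g x) (Iic x) x :=
        (hg.differentiable one_ne_zero x).hasDerivAt.hasDerivWithinAt.congr hfg (hfg self_mem_Iic)
      have hright : HasDerivWithinAt f (deriv g x) (Ici x) x := hderiv ▸
        (hh.differentiable one_ne_zero x).hasDerivAt.hasDerivWithinAt.congr hfh (hfh self_mem_Ici)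
      simpa only [Iic_union_Ici, hasDerivWithinAt_univ] using hleft.union hright
    · rw [if_neg (not_le.2 hx)]
      exact (hh.differentiable one_ne_zero x).hasDerivAt.congr_of_eventuallyEq <|
        eventually_of_mem (Ioi_mem_nhds hx) fun _ hy => hfh (Ioi_subset_Ici_self hy)
  rw [contDiff_one_iff_deriv, funext fun x => (hasDerivAt x).deriv]
  exact ⟨fun x => (hasDerivAt x).differentiableAt,
    (hg.continuous_deriv le_rfl).if_le (hh.continuous_deriv le_rfl) continuous_id
      continuous_const fun x hx => hx ▸ hderiv⟩

theorem contDiff_one_comp_abs {G : ℝ → ℝ} (hG : ContDiff ℝ 1 G) (h0 : deriv G 0 = 0) :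
    ContDiff ℝ 1 fun x => G |x| :=
  contDiff_one_of_eqOn_Iic_of_eqOn_Ici (hG.comp contDiff_neg) hG
    (fun x hx => by simp only [abs_of_nonpos (mem_Iic.1 hx), Function.comp_apply])
    (fun x hx => by simp only [abs_of_nonneg (mem_Ici.1 hx)])
    (by rw [Function.comp_def, deriv_comp_neg, neg_zero, h0, neg_zero])

theorem iteratedDeriv_four_const_mul_exp_const_mul {c s : ℝ} (hs : s ^ 4 = 1) :
    iteratedDeriv 4 (fun y => c * exp (s * y)) = fun y => c * exp (s * y) := by
  funext y
  rw [iteratedDeriv_const_mul_field, iteratedDeriv_exp_const_mul]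
  simp only [hs, one_mul]

theorem Filter.EventuallyEq.differentiableAt_iteratedDeriv {𝕜 E : Type*}
    [NontriviallyNormedField 𝕜] [NormedAddCommGroup E] [NormedSpace 𝕜 E] {f F : 𝕜 → E} {x : 𝕜}
    (hfF : f =ᶠ[𝓝 x] F) (hF : ContDiff 𝕜 ∞ F) (k : ℕ) :
    DifferentiableAt 𝕜 (iteratedDeriv k f) x :=
  (hF.differentiable_iteratedDeriv k (mod_cast ENat.natCast_lt_top k) x).congr_of_eventuallyEq <|
    hfF.eventuallyEq_nhds.mono fun _ hy => hy.iteratedDeriv_eq k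

theorem memLp_two_exp_neg_abs : MemLp (fun x : ℝ => exp (-|x|)) 2 volume := by
  rw [memLp_two_iff_integrable_sq (by fun_prop)]
  have hIic : IntegrableOn (fun x : ℝ => exp (-|x|) ^ 2) (Iic 0) :=
    (integrableOn_exp_mul_Iic two_pos 0).congr_fun (fun x hx => by
      rw [abs_of_nonpos (mem_Iic.1 hx), ← exp_nat_mul]; ring_nf) measurableSet_Iic
  have hIoi : IntegrableOn (fun x : ℝ => exp (-|x|) ^ 2) (Ioi 0) :=
    (integrableOn_exp_mul_Ioi (neg_lt_zero.2 two_pos) 0).congr_fun (fun x hx => by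
      rw [abs_of_pos (mem_Ioi.1 hx), ← exp_nat_mul]; ring_nf) measurableSet_Ioi
  simpa only [Iic_union_Ioi, integrableOn_univ] using hIic.union hIoi

theorem thetaTilde_of_lt {x : ℝ} (hx : x < π / 4) : thetaTilde x = cos x := if_pos hx

theorem thetaTilde_of_le {x : ℝ} (hx : π / 4 ≤ x) :
    thetaTilde x = exp (π / 4) / √2 * exp (-x) := if_neg hx.not_gt

theorem exp_pi_div_four_div_sqrt_two_mul_exp_neg :
    exp (π / 4) / √2 * exp (-(π / 4)) = cos (π / 4) := by
  rw [div_mul_eq_mul_div, ← exp_add, add_neg_cancel, exp_zero, cos_pi_div_four]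
  field_simp
  rw [sq_sqrt zero_le_two]

theorem contDiff_thetaTilde : ContDiff ℝ 1 thetaTilde := by
  refine contDiff_one_of_eqOn_Iic_of_eqOn_Ici (a := π / 4)
    (h := fun x => exp (π / 4) / √2 * exp (-x)) contDiff_cos (by fun_prop) (fun x hx => ?_)
    (fun x hx => thetaTilde_of_le hx) ?_
  · rcases (mem_Iic.1 hx).lt_or_eq with hx | rfl
    · exact thetaTilde_of_lt hx
    · rw [thetaTilde_of_le le_rfl, exp_pi_div_four_div_sqrt_two_mul_exp_neg]
  · -- The tail is minus its own derivative, and `sin (π/4) = cos (π/4)`.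
    have hexp : HasDerivAt (fun x => exp (π / 4) / √2 * exp (-x))
        (-(exp (π / 4) / √2 * exp (-(π / 4)))) (π / 4) := by
      simpa using ((hasDerivAt_neg (π / 4)).exp).const_mul (exp (π / 4) / √2)
    rw [Real.deriv_cos, hexp.deriv, exp_pi_div_four_div_sqrt_two_mul_exp_neg, sin_pi_div_four,
      cos_pi_div_four]

theorem deriv_thetaTilde_zero : deriv thetaTilde 0 = 0 := by
  have hcos : thetaTilde =ᶠ[𝓝 0] cos :=
    eventually_of_mem (Iio_mem_nhds (by positivity)) fun _ hx => thetaTilde_of_lt hx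
  rw [hcos.deriv_eq, Real.deriv_cos, sin_zero, neg_zero]

theorem fEven_of_abs_lt {x : ℝ} (hx : |x| < π / 4) : fEven x = cos x := by
  rw [fEven, thetaTilde_of_lt hx, cos_abs]

theorem fEven_of_le_abs {x : ℝ} (hx : π / 4 ≤ |x|) :
    fEven x = exp (π / 4) / √2 * exp (-|x|) :=
  thetaTilde_of_le hx

theorem fEven_zero : fEven 0 = 1 := by
  rw [fEven_of_abs_lt (by rw [abs_zero]; positivity), cos_zero]

theorem contDiff_fEven : ContDiff ℝ 1 fEven :=
  contDiff_one_comp_abs contDiff_thetaTilde deriv_thetaTilde_zero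

theorem abs_fEven_le (x : ℝ) : |fEven x| ≤ exp (π / 4) * exp (-|x|) := by
  rcases lt_or_ge |x| (π / 4) with hx | hx
  · rw [fEven_of_abs_lt hx, ← exp_add]
    exact (abs_cos_le_one x).trans (one_le_exp (by linarith))
  · rw [fEven_of_le_abs hx, abs_of_pos (by positivity)]
    gcongr
    exact div_le_self (exp_pos _).le (one_le_sqrt.2 one_le_two)

theorem memLp_fEven : MemLp fEven 2 volume :=
  (memLp_two_exp_neg_abs.const_mul (exp (π / 4))).of_le
    contDiff_fEven.continuous.aestronglyMeasurable <| ae_of_all _ fun x => by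
      rw [norm_eq_abs, norm_of_nonneg (by positivity)]
      exact abs_fEven_le x

theorem exists_contDiff_iteratedDeriv_four_eq_self_eventuallyEq_fEven {x : ℝ}
    (hx : |x| ≠ π / 4) :
    ∃ F : ℝ → ℝ, ContDiff ℝ ∞ F ∧ iteratedDeriv 4 F = F ∧ fEven =ᶠ[𝓝 x] F := by
  rcases hx.lt_or_gt with hx | hx
  · refine ⟨cos, contDiff_cos, by simp, ?_⟩
    exact eventually_of_mem ((isOpen_lt continuous_abs continuous_const).mem_nhds hx)
      fun y hy => fEven_of_abs_lt hy
  have hπ : 0 < π / 4 := by positivity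
  rcases lt_abs.1 hx with hx | hx
  · refine ⟨fun y => exp (π / 4) / √2 * exp (-1 * y), by fun_prop,
      iteratedDeriv_four_const_mul_exp_const_mul (by norm_num),
      eventually_of_mem (Ioi_mem_nhds hx) fun y hy => ?_⟩
    have hy : π / 4 < y := hy
    rw [fEven_of_le_abs (by rw [abs_of_pos (by linarith)]; exact hy.le),
      abs_of_pos (by linarith)]
    simp only [neg_one_mul]
  · refine ⟨fun y => exp (π / 4) / √2 * exp (1 * y), by fun_prop,
      iteratedDeriv_four_const_mul_exp_const_mul (by norm_num),
      eventually_of_mem (Iio_mem_nhds (by linarith : x < -(π / 4))) fun y hy => ?_⟩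
    have hy : y < -(π / 4) := hy
    rw [fEven_of_le_abs (by rw [abs_of_neg (by linarith)]; linarith),
      abs_of_neg (by linarith), neg_neg]
    simp only [one_mul]

theorem stmt_3 :
    ContDiff ℝ 1 fEven ∧
    MemLp fEven 2 volume ∧
    fEven ≠ 0 ∧
    ∀ x : ℝ, |x| ≠ π / 4 →
      (∀ k ≤ 3, DifferentiableAt ℝ (iteratedDeriv k fEven) x) ∧
      iteratedDeriv 4 fEven x = fEven x := by
  refine ⟨contDiff_fEven, memLp_fEven, fun h => by simpa [fEven_zero] using congrFun h 0,
    fun x hx => ?_⟩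
  obtain ⟨F, hF, hF4, hfF⟩ := exists_contDiff_iteratedDeriv_four_eq_self_eventuallyEq_fEven hx
  exact ⟨fun k _ => hfF.differentiableAt_iteratedDeriv hF k,
    by rw [hfF.iteratedDeriv_eq, hF4, hfF.eq_of_nhds]⟩
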